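/- Let K be an extriangulated category and let C be a full additive subcategory of K closed under extensions and containing 0. Then ι(C) = { X ∈ K : there exists an inflation X ↣ C with C ∈ C } is closed under extensions, provided K is hereditary (E²(−,−) = 0). -/

import Mathlib

/-! **Statement 6.**  We model a hereditary extriangulated category `K` (as in the paper,
e.g. `K^{[-1,0]}(proj Λ)`) as an extension-closed full subcategory of a triangulated
category `D`, the conflations of `K` being the triangles of `D` all of whose terms lie
in `K`; hereditary means `E²(X,Y) = Hom_D(X, Y⟦2⟧) = 0` for all `X, Y ∈ K`. -/

open CategoryTheory Limits Pretriangulated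

namespace Stmt6

variable {D : Type*} [Category D] [Preadditive D] [HasZeroObject D] [HasBinaryBiproducts D]
  [HasShift D ℤ] [∀ n : ℤ, (CategoryTheory.shiftFunctor D n).Additive]
  [Pretriangulated D] [IsTriangulated D]

/-- A conflation of the extriangulated category `K`. -/
def IsConflation (K : Set D) {X Y Z : D} (f : X ⟶ Y) (g : Y ⟶ Z) : Prop :=
  X ∈ K ∧ Y ∈ K ∧ Z ∈ K ∧ ∃ h : Z ⟶ X⟦(1 : ℤ)⟧, Triangle.mk f g h ∈ distTriang D

/-- `X` admits an inflation into an object of `C`. -/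
def MemIota (K C : Set D) (X : D) : Prop :=
  ∃ (C₁ : D) (_ : C₁ ∈ C) (i : X ⟶ C₁) (W : D) (p : C₁ ⟶ W), IsConflation K i p

end Stmt6

/-! Let `X ↣ C_X ↠ W_X` and `Z ↣ C_Z ↠ W_Z` be conflations with `C_X, C_Z ∈ C`. Pushing
`X ↣ Y ↠ Z` out along `X ↣ C_X` gives conflations `C_X ↣ Y' ↠ Z` and `Y ↣ Y' ↠ W_X`.
Heredity kills the composite `W_Z → Z⟦1⟧ → C_X⟦2⟧` of connecting morphisms, so `W_Z → Z⟦1⟧`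
lifts to `W_Z → Y'⟦1⟧`, the connecting morphism of a conflation `Y' ↣ U ↠ W_Z`. By the
octahedral axiom `U` is an extension of `C_Z` by `C_X`, hence lies in `C`, and inflations
compose, so `Y ↣ Y' ↣ U` shows `Y ∈ ι(C)`. -/

namespace Stmt6

variable {D : Type*} [Category D] [Preadditive D] [HasShift D ℤ]

lemma eq_zero_of_shift_two_eq_zero {A B : D} (hAB : ∀ φ : A ⟶ B⟦(2 : ℤ)⟧, φ = 0)
    (ψ : A ⟶ B⟦(1 : ℤ)⟧⟦(1 : ℤ)⟧) : ψ = 0 := by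
  let e : B⟦(1 : ℤ)⟧⟦(1 : ℤ)⟧ ≅ B⟦(2 : ℤ)⟧ := (shiftFunctorAdd' D (1 : ℤ) 1 2 (by omega)).symm.app B
  exact (cancel_mono e.hom).1 (by rw [hAB (ψ ≫ e.hom), zero_comp])

variable [HasZeroObject D] [∀ n : ℤ, (CategoryTheory.shiftFunctor D n).Additive]
  [Pretriangulated D]

lemma exists_inv_rot_mk {A V B : D} {u : V ⟶ B} {v : B ⟶ A⟦(1 : ℤ)⟧}
    {w : A⟦(1 : ℤ)⟧ ⟶ V⟦(1 : ℤ)⟧} (hT : Triangle.mk u v w ∈ distTriang D) :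
    ∃ x : A ⟶ V, Triangle.mk x u v ∈ distTriang D := by
  let e : A ≅ A⟦(1 : ℤ)⟧⟦(-1 : ℤ)⟧ := (shiftEquiv D (1 : ℤ)).unitIso.app A
  let x : A⟦(1 : ℤ)⟧⟦(-1 : ℤ)⟧ ⟶ V := -w⟦(-1 : ℤ)⟧' ≫ (shiftEquiv D (1 : ℤ)).unitIso.inv.app V
  have hT' : Triangle.mk x u (v ≫ (shiftEquiv D (1 : ℤ)).counitIso.inv.app _) ∈ distTriang D :=
    inv_rot_of_distTriang _ hT
  refine ⟨e.hom ≫ x, isomorphic_distinguished _ hT' _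
    (Triangle.isoMk (Triangle.mk (e.hom ≫ x) u v) _ e (Iso.refl V) (Iso.refl B)
      (Category.comp_id _) ((Category.comp_id u).trans (Category.id_comp u).symm) ?_)⟩
  exact (congrArg (v ≫ ·) ((shiftEquiv D (1 : ℤ)).counitInv_app_functor A).symm).trans
    (Category.id_comp _).symm

def IsExtClosed (K : Set D) : Prop :=
  ∀ {X Y Z : D} (f : X ⟶ Y) (g : Y ⟶ Z) (h : Z ⟶ X⟦(1 : ℤ)⟧),
    Triangle.mk f g h ∈ distTriang D → X ∈ K → Z ∈ K → Y ∈ K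

variable {K : Set D} [IsTriangulated D]

lemma IsConflation.exists_comp (hKext : IsExtClosed K)
    {A B B' E E' : D} {f₁ : A ⟶ B} {g₁ : B ⟶ B'} {f₂ : B ⟶ E} {g₂ : E ⟶ E'}
    (h₁ : IsConflation K f₁ g₁) (h₂ : IsConflation K f₂ g₂) :
    ∃ (W : D) (p : E ⟶ W), IsConflation K (f₁ ≫ f₂) p := by
  obtain ⟨hA, -, hB', _, hT₁⟩ := h₁
  obtain ⟨-, hE, hE', _, hT₂⟩ := h₂
  obtain ⟨W, p, δ, hT⟩ := distinguished_cocone_triangle (f₁ ≫ f₂)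
  exact ⟨W, p, hA, hE, hKext _ _ _ (Triangulated.someOctahedron rfl hT₁ hT₂ hT).mem hB' hE', δ, hT⟩

lemma IsConflation.exists_pushout (hKext : IsExtClosed K)
    {X Y Z E W : D} {f : X ⟶ Y} {g : Y ⟶ Z} {i : X ⟶ E} {p : E ⟶ W}
    (hfg : IsConflation K f g) (hip : IsConflation K i p) :
    ∃ (Y' : D) (j : Y ⟶ Y') (q : Y' ⟶ W) (f' : E ⟶ Y') (g' : Y' ⟶ Z),
      IsConflation K j q ∧ IsConflation K f' g' := by
  obtain ⟨-, hY, hZ, h, hT⟩ := hfg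
  obtain ⟨-, hE, hW, δ, hTi⟩ := hip
  have hT₂ : Triangle.mk h (-f⟦(1 : ℤ)⟧') (-g⟦(1 : ℤ)⟧') ∈ distTriang D :=
    rot_of_distTriang _ (rot_of_distTriang _ hT)
  obtain ⟨Y', q, _, hTq⟩ := distinguished_cocone_triangle₁ (δ ≫ (-f⟦(1 : ℤ)⟧'))
  -- the octahedron on `W → X⟦1⟧ → Y⟦1⟧`, whose fibres are `E`, `Z` and `Y'`
  have O := Triangulated.someOctahedron' rfl (rot_of_distTriang _ hTi) hT₂ hTq
  have hY' : Y' ∈ K := hKext _ _ _ O.mem hE hZ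
  obtain ⟨j, hTj⟩ := exists_inv_rot_mk hTq
  exact ⟨Y', j, q, O.m₁, O.m₃, ⟨hY, hY', hW, _, hTj⟩, hE, hY', hZ, _, O.mem⟩

lemma memIota_of_isConflation (hKext : IsExtClosed K)
    (hered : ∀ {X Y : D}, X ∈ K → Y ∈ K → ∀ φ : X ⟶ Y⟦(2 : ℤ)⟧, φ = 0) {C : Set D}
    (hCext : ∀ {X Y Z : D} (f : X ⟶ Y) (g : Y ⟶ Z),
      IsConflation K f g → X ∈ C → Z ∈ C → Y ∈ C)
    {E Y Z : D} {f : E ⟶ Y} {g : Y ⟶ Z} (hfg : IsConflation K f g) (hE : E ∈ C)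
    (hZ : MemIota K C Z) : MemIota K C Y := by
  obtain ⟨hEK, hY, -, h, hT⟩ := hfg
  obtain ⟨CZ, hCZ, _, W, _, -, hCZK, hW, δ, hTi⟩ := hZ
  have hT₃ : Triangle.mk (-f⟦(1 : ℤ)⟧') (-g⟦(1 : ℤ)⟧') (-h⟦(1 : ℤ)⟧') ∈ distTriang D :=
    rot_of_distTriang _ (rot_of_distTriang _ (rot_of_distTriang _ hT))
  obtain ⟨l, hl⟩ := Triangle.coyoneda_exact₃ _ hT₃ δ (eq_zero_of_shift_two_eq_zero (hered hW hEK) _)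
  obtain ⟨V, q, _, hTl⟩ := distinguished_cocone_triangle₁ l
  -- the octahedron on `W → Y⟦1⟧ → Z⟦1⟧`, whose fibres are `V`, `E⟦1⟧` and `CZ`
  obtain ⟨_, hTx⟩ :=
    exists_inv_rot_mk (Triangulated.someOctahedron' hl.symm hTl hT₃ (rot_of_distTriang _ hTi)).mem
  have hV : V ∈ K := hKext _ _ _ hTx hEK hCZK
  obtain ⟨j, hTj⟩ := exists_inv_rot_mk hTl
  exact ⟨V, hCext _ _ ⟨hEK, hV, hCZK, _, hTx⟩ hE hCZ, j, W, q, hY, hV, hW, _, hTj⟩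

end Stmt6

namespace Stmt6

variable {D : Type*} [Category D] [Preadditive D] [HasZeroObject D] [HasBinaryBiproducts D]
  [HasShift D ℤ] [∀ n : ℤ, (CategoryTheory.shiftFunctor D n).Additive]
  [Pretriangulated D] [IsTriangulated D]

theorem stmt6 (K : Set D)
    (hKext : ∀ {X Y Z : D} (f : X ⟶ Y) (g : Y ⟶ Z) (h : Z ⟶ X⟦(1 : ℤ)⟧),
      Triangle.mk f g h ∈ (distTriang D) → X ∈ K → Z ∈ K → Y ∈ K)
    -- `K` is hereditary
    (hered : ∀ {X Y : D}, X ∈ K → Y ∈ K → ∀ φ : X ⟶ Y⟦(2 : ℤ)⟧, φ = 0)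
    -- `C` is a full additive subcategory of `K`, closed under extensions, containing `0`
    (C : Set D)
    (hCext : ∀ {X Y Z : D} (f : X ⟶ Y) (g : Y ⟶ Z),
      IsConflation K f g → X ∈ C → Z ∈ C → Y ∈ C) :
    -- then `ι(C)` is closed under extensions
    ∀ {X Y Z : D} (f : X ⟶ Y) (g : Y ⟶ Z), IsConflation K f g →
      MemIota K C X → MemIota K C Z → MemIota K C Y := by
  intro X Y Z f g hfg hX hZ
  obtain ⟨CX, hCX, _, _, _, hip⟩ := hX
  obtain ⟨Y', j, _, f', _, hj, hf'⟩ := hfg.exists_pushout hKext hip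
  obtain ⟨U, hU, k, _, _, hk⟩ := memIota_of_isConflation hKext hered hCext hf' hCX hZ
  obtain ⟨V, r, hjk⟩ := hj.exists_comp hKext hk
  exact ⟨U, hU, j ≫ k, V, r, hjk⟩

end Stmt6
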